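/- Let J be a compact interval, ν ∈ (0,1), and let f : J → ℝ be a twice differentiable map with f(J) ⊆ J and 0 < Df(x) ≤ ν for all x ∈ J, and suppose |Nf(x)| ≤ C₁ for all x ∈ J, where Nf = D²f/Df. Then for every k ≥ 1 and every x ∈ J, |D²f^k(x)| ≤ (C₁/(1 − ν)) · ν^k. In particular, the second derivatives of the iterates f^k converge uniformly to 0 as k → ∞. -/

import Mathlib

open Set Finset Function

theorem prod_range_succ_iterate {α M : Type*} [CommMonoid M] (g : α → M) (f : α → α) (k : ℕ)
    (y : α) :
    ∏ j ∈ range (k + 1), g (f^[j] y) = (∏ j ∈ range k, g (f^[j] (f y))) * g y := by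
  simp only [prod_range_succ', iterate_succ_apply, iterate_zero_apply]

section Derivatives

variable {𝕜 : Type*} [NontriviallyNormedField 𝕜] {s : Set 𝕜} {f f' f'' : 𝕜 → 𝕜}

theorem hasDerivAt_iterate_of_mapsTo (hmaps : MapsTo f s s)
    (hf : ∀ x ∈ s, HasDerivAt f (f' x) x) (k : ℕ) {x : 𝕜} (hx : x ∈ s) :
    HasDerivAt f^[k] (∏ j ∈ range k, f' (f^[j] x)) x := by
  induction k generalizing x with
  | zero => simpa using hasDerivAt_id x
  | succ k ih =>
    rw [iterate_succ, prod_range_succ_iterate]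
    exact (ih (hmaps hx)).comp x (hf x hx)

theorem hasDerivAt_prod_iterate_succ {k : ℕ} {x d : 𝕜}
    (hd : HasDerivAt (fun y ↦ ∏ j ∈ range k, f' (f^[j] y)) d (f x))
    (hf : HasDerivAt f (f' x) x) (hf' : HasDerivAt f' (f'' x) x) :
    HasDerivAt (fun y ↦ ∏ j ∈ range (k + 1), f' (f^[j] y))
      (d * f' x * f' x + (∏ j ∈ range k, f' (f^[j] (f x))) * f'' x) x := by
  simp only [prod_range_succ_iterate]
  exact (hd.comp x hf).mul hf'

end Derivatives

section Contraction

variable {s : Set ℝ} {f f' f'' : ℝ → ℝ} {ν C : ℝ}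

theorem prod_iterate_mem_Icc_pow (hmaps : MapsTo f s s) (hpos : ∀ x ∈ s, 0 < f' x)
    (hle : ∀ x ∈ s, f' x ≤ ν) (k : ℕ) {x : ℝ} (hx : x ∈ s) :
    ∏ j ∈ range k, f' (f^[j] x) ∈ Icc 0 (ν ^ k) := by
  have hnonneg : ∀ j ∈ range k, 0 ≤ f' (f^[j] x) := fun j _ ↦ (hpos _ (hmaps.iterate j hx)).le
  refine ⟨prod_nonneg hnonneg, ?_⟩
  calc ∏ j ∈ range k, f' (f^[j] x) ≤ ∏ _j ∈ range k, ν :=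
        prod_le_prod hnonneg fun j _ ↦ hle _ (hmaps.iterate j hx)
    _ = ν ^ k := by rw [prod_const, card_range]

/-- With `M = C / (1 - ν)`, the recursion `D²f^{k+1}(x) = D²f^k(f x) Df(x)² + Df^k(f x) D²f(x)`
propagates `|D²f^k| ≤ M νᵏ` because `M ν + C = M`. -/
theorem exists_hasDerivAt_prod_iterate_abs_le (hν : ν < 1) (hmaps : MapsTo f s s)
    (hf : ∀ x ∈ s, HasDerivAt f (f' x) x) (hf' : ∀ x ∈ s, HasDerivAt f' (f'' x) x)
    (hpos : ∀ x ∈ s, 0 < f' x) (hle : ∀ x ∈ s, f' x ≤ ν)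
    (hN : ∀ x ∈ s, |f'' x / f' x| ≤ C) (k : ℕ) {x : ℝ} (hx : x ∈ s) :
    ∃ d, HasDerivAt (fun y ↦ ∏ j ∈ range k, f' (f^[j] y)) d x ∧
      |d| ≤ C / (1 - ν) * ν ^ k := by
  have h1ν : 0 < 1 - ν := sub_pos.2 hν
  have hC : 0 ≤ C := (abs_nonneg _).trans (hN x hx)
  have hM : 0 ≤ C / (1 - ν) := div_nonneg hC h1ν.le
  have hMC : C / (1 - ν) * ν + C = C / (1 - ν) := by field_simp; ring
  induction k generalizing x with
  | zero => exact ⟨0, by simpa using hasDerivAt_const x (1 : ℝ), by simpa using hM⟩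
  | succ k ih =>
    obtain ⟨d, hd, hd_le⟩ := ih (hmaps hx)
    refine ⟨_, hasDerivAt_prod_iterate_succ hd (hf x hx) (hf' x hx), ?_⟩
    obtain ⟨hP0, hP⟩ := prod_iterate_mem_Icc_pow hmaps hpos hle k (hmaps hx)
    have hu := hpos x hx
    have hu_le := hle x hx
    have hν0 : 0 ≤ ν := hu.le.trans hu_le
    have hf''_le : |f'' x| ≤ C * ν := calc
      |f'' x| = |f'' x / f' x| * f' x := by rw [abs_div, abs_of_pos hu, div_mul_cancel₀ _ hu.ne']
      _ ≤ C * ν := mul_le_mul (hN x hx) hu_le hu.le hC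
    calc |d * f' x * f' x + (∏ j ∈ range k, f' (f^[j] (f x))) * f'' x|
        ≤ |d| * f' x * f' x + (∏ j ∈ range k, f' (f^[j] (f x))) * |f'' x| := by
          refine (abs_add_le _ _).trans_eq ?_
          rw [abs_mul, abs_mul, abs_mul, abs_of_pos hu, abs_of_nonneg hP0]
      _ ≤ C / (1 - ν) * ν ^ k * ν * ν + ν ^ k * (C * ν) := by gcongr
      _ = (C / (1 - ν) * ν + C) * ν ^ (k + 1) := by ring
      _ = C / (1 - ν) * ν ^ (k + 1) := by rw [hMC]

end Contraction

theorem second_derivative_of_iterates_tendsto_zero_general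
    (a b ν C₁ : ℝ) (hν : ν ∈ Set.Ioo (0:ℝ) 1)
    (f f' f'' : ℝ → ℝ)
    (hmaps : Set.MapsTo f (Set.Icc a b) (Set.Icc a b))
    (hd1 : ∀ x ∈ Set.Icc a b, HasDerivAt f (f' x) x)
    (hd2 : ∀ x ∈ Set.Icc a b, HasDerivAt f' (f'' x) x)
    (hpos : ∀ x ∈ Set.Icc a b, 0 < f' x)
    (hle : ∀ x ∈ Set.Icc a b, f' x ≤ ν)
    (hN : ∀ x ∈ Set.Icc a b, |f'' x / f' x| ≤ C₁) :
    ∀ k : ℕ, 1 ≤ k → ∀ x ∈ Set.Icc a b,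
      HasDerivAt (f^[k]) (∏ j ∈ Finset.range k, f' (f^[j] x)) x ∧
      ∃ d : ℝ,
        HasDerivAt (fun y => ∏ j ∈ Finset.range k, f' (f^[j] y)) d x ∧
        |d| ≤ C₁ / (1 - ν) * ν ^ k := by
  intro k _ x hx
  exact ⟨hasDerivAt_iterate_of_mapsTo hmaps hd1 k hx,
    exists_hasDerivAt_prod_iterate_abs_le hν.2 hmaps hd1 hd2 hpos hle hN k hx⟩

/-- Decay of second derivatives of iterates: if `0 < Df ≤ ν < 1` and `|Nf| ≤ C₁` on the
compact invariant interval `J = [a,b]`, then `|D²f^k(x)| ≤ (C₁/(1−ν)) · ν^k` for all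
`k ≥ 1` and `x ∈ J`; in particular `D²f^k → 0` uniformly.  Here
`Df^k(x) = ∏_{j<k} f'(fʲ(x))` and `d = D²f^k(x)`. -/
theorem second_derivative_of_iterates_tendsto_zero
    (a b ν C₁ : ℝ) (hab : a < b) (hν : ν ∈ Set.Ioo (0:ℝ) 1)
    (f f' f'' : ℝ → ℝ)
    (hmaps : Set.MapsTo f (Set.Icc a b) (Set.Icc a b))
    (hd1 : ∀ x ∈ Set.Icc a b, HasDerivAt f (f' x) x)
    (hd2 : ∀ x ∈ Set.Icc a b, HasDerivAt f' (f'' x) x)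
    (hpos : ∀ x ∈ Set.Icc a b, 0 < f' x)
    (hle : ∀ x ∈ Set.Icc a b, f' x ≤ ν)
    (hN : ∀ x ∈ Set.Icc a b, |f'' x / f' x| ≤ C₁) :
    ∀ k : ℕ, 1 ≤ k → ∀ x ∈ Set.Icc a b,
      HasDerivAt (f^[k]) (∏ j ∈ Finset.range k, f' (f^[j] x)) x ∧
      ∃ d : ℝ,
        HasDerivAt (fun y => ∏ j ∈ Finset.range k, f' (f^[j] y)) d x ∧
        |d| ≤ C₁ / (1 - ν) * ν ^ k :=
  second_derivative_of_iterates_tendsto_zero_general a b ν C₁ hν f f' f'' hmaps hd1 hd2 hpos hle hN
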